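/- Let n ≥ 2 and q ≥ 1. Let each n×n symmetric matrix A_α (α = 1,…,q) have the block form A_α = [[D_α, B_α],[B_αᵀ, c_α]] where D_α = ρ_α D + μ_α I_{n−1} with D diagonal, B_α ∈ ℝ^{n−1}, c_α ∈ ℝ. Let ν = e_n be the last basis vector. Then for every multi-index u ∈ ℕ^q, ⟨T_u ν, ν⟩ = σ̃_u, where T_u = T_u(A₁,…,A_q) is the generalized Newton transformation of the tuple (A₁,…,A_q) and σ̃_u is the coefficient of t^u in det(I_{n−1} + Σ_α t_α D_α). -/

import Mathlib

/-- `esigma M r` is the coefficient of `t^r` in `det(I + t M)`,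
the `r`-th elementary symmetric function of the eigenvalues of `M`. -/
noncomputable def esigma {κ : Type} [Fintype κ] [DecidableEq κ] (M : Matrix κ κ ℝ) (r : ℕ) : ℝ :=
  ((1 + (Polynomial.X : Polynomial ℝ) • M.map Polynomial.C).det).coeff r
/-- `msigma A u` is the coefficient of `t^u = ∏ α, t α ^ u α` in the Newton polynomial
`det(I + ∑ α, t α • A α)`. -/
noncomputable def msigma {ι κ : Type} [Fintype ι] [DecidableEq ι] [Fintype κ] [DecidableEq κ]
    (A : ι → Matrix κ κ ℝ) (u : ι → ℕ) : ℝ :=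
  MvPolynomial.coeff (Finsupp.equivFunOnFinite.symm u)
    ((1 + ∑ α, (MvPolynomial.X α : MvPolynomial ι ℝ) • (A α).map MvPolynomial.C).det)

open Matrix

/-!
Writing `M(t) = I + ∑ α, t α • A α` and `T(t) = ∑ u, T u t^u`, the recursion for `T` says exactly
that `M(t) T(t) = det M(t) • I`. Since `M(0) = I`, this determines `T(t)` as the adjugate of `M(t)`.
The `(ν, ν)` entry of an adjugate is the principal minor complementary to `ν`, i.e. here
`det(I + ∑ α, t α • D α)`.
-/

open MvPolynomial

noncomputable def newtonMatrix {ι κ R : Type} [Fintype ι] [DecidableEq κ] [CommSemiring R]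
    (A : ι → Matrix κ κ R) : Matrix κ κ (MvPolynomial ι R) :=
  1 + ∑ α, (X α : MvPolynomial ι R) • (A α).map C

theorem msigma_eq_coeff_det {ι κ : Type} [Fintype ι] [DecidableEq ι] [Fintype κ] [DecidableEq κ]
    (A : ι → Matrix κ κ ℝ) (u : ι → ℕ) :
    msigma A u = coeff (Finsupp.equivFunOnFinite.symm u) (newtonMatrix A).det := rfl

theorem coeff_equivFunOnFinite_X_mul {ι R : Type} [Finite ι] [DecidableEq ι] [CommSemiring R]
    (u : ι → ℕ) (α : ι) (p : MvPolynomial ι R) :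
    coeff (Finsupp.equivFunOnFinite.symm u) (X α * p) =
      if u α = 0 then 0
      else coeff (Finsupp.equivFunOnFinite.symm (Function.update u α (u α - 1))) p := by
  rw [coeff_X_mul']
  by_cases h : u α = 0
  · simp [h]
  · rw [if_pos (by simpa using h), if_neg h]
    congr 1
    ext β
    rcases eq_or_ne β α with rfl | hβ <;> simp [*]

theorem map_coeff_map_C_mul {ι κ R : Type} [Fintype κ] [CommSemiring R] (A : Matrix κ κ R)
    (N : Matrix κ κ (MvPolynomial ι R)) (s : ι →₀ ℕ) :
    (A.map C * N).map (coeff s) = A * N.map (coeff s) := by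
  ext i j
  simp [mul_apply, coeff_sum, coeff_C_mul]

section Adjugate

variable {ι κ R : Type} [Fintype ι] [Fintype κ] [DecidableEq κ] [CommRing R]

theorem newtonMatrix_adjugate_eq (A : ι → Matrix κ κ R) :
    (newtonMatrix A).adjugate = (newtonMatrix A).det • 1 -
      ∑ α, (X α : MvPolynomial ι R) • ((A α).map C * (newtonMatrix A).adjugate) := by
  rw [eq_sub_iff_add_eq, ← mul_adjugate, newtonMatrix, add_mul, one_mul, Finset.sum_mul]
  simp only [smul_mul]

theorem map_coeff_newtonMatrix_adjugate [DecidableEq ι] (A : ι → Matrix κ κ R) (u : ι → ℕ) :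
    (newtonMatrix A).adjugate.map (coeff (Finsupp.equivFunOnFinite.symm u)) =
      coeff (Finsupp.equivFunOnFinite.symm u) (newtonMatrix A).det • 1 -
        ∑ α, if u α = 0 then 0 else
          A α * (newtonMatrix A).adjugate.map
            (coeff (Finsupp.equivFunOnFinite.symm (Function.update u α (u α - 1)))) := by
  ext i j
  conv_lhs => rw [newtonMatrix_adjugate_eq]
  simp only [map_apply, Matrix.sub_apply, Matrix.smul_apply, Matrix.sum_apply, coeff_sub,
    coeff_sum, smul_eq_mul, coeff_equivFunOnFinite_X_mul]
  congr 1
  · by_cases hij : i = j <;> simp [one_apply, hij]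
  · refine Finset.sum_congr rfl fun α _ => ?_
    split_ifs
    · rfl
    · rw [← map_coeff_map_C_mul]
      rfl

theorem map_constantCoeff_newtonMatrix_adjugate (A : ι → Matrix κ κ R) :
    (newtonMatrix A).adjugate.map constantCoeff = 1 := by
  have hM : (constantCoeff : MvPolynomial ι R →+* R).mapMatrix (newtonMatrix A) = 1 := by
    ext i j
    simp [newtonMatrix, one_apply, Matrix.sum_apply]
  simpa [hM] using (constantCoeff : MvPolynomial ι R →+* R).map_adjugate (newtonMatrix A)

end Adjugate

theorem eq_map_coeff_newtonMatrix_adjugate {ι κ : Type} [Fintype ι] [DecidableEq ι] [Fintype κ]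
    [DecidableEq κ] (A : ι → Matrix κ κ ℝ) (T : (ι → ℕ) → Matrix κ κ ℝ) (hT0 : T 0 = 1)
    (hTrec : ∀ u : ι → ℕ, u ≠ 0 →
      T u = msigma A u • (1 : Matrix κ κ ℝ)
        - ∑ α, if u α = 0 then 0 else A α * T (Function.update u α (u α - 1)))
    (u : ι → ℕ) :
    T u = (newtonMatrix A).adjugate.map (coeff (Finsupp.equivFunOnFinite.symm u)) := by
  induction u using WellFoundedLT.induction with
  | _ u ih =>
    rcases eq_or_ne u 0 with rfl | hu
    · have hzero : Finsupp.equivFunOnFinite.symm (0 : ι → ℕ) = 0 := Finsupp.ext fun _ => rfl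
      rw [hT0, hzero, ← constantCoeff_eq, map_constantCoeff_newtonMatrix_adjugate]
    · rw [hTrec u hu, map_coeff_newtonMatrix_adjugate, msigma_eq_coeff_det]
      refine congrArg _ (Finset.sum_congr rfl fun α _ => ?_)
      split_ifs with hα
      · rfl
      · rw [ih _ (update_lt_self_iff.2 (by omega))]

theorem adjugate_inr_inr {κ R : Type} [Fintype κ] [DecidableEq κ] [CommRing R]
    (M : Matrix (κ ⊕ Unit) (κ ⊕ Unit) R) : M.adjugate (.inr ()) (.inr ()) = M.toBlocks₁₁.det := by
  have hM : M.updateRow (.inr ()) (Pi.single (.inr ()) 1) =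
      fromBlocks M.toBlocks₁₁ M.toBlocks₁₂ 0 1 := by
    ext (i | i) (j | j) <;> simp [updateRow_apply, toBlocks₁₁, toBlocks₁₂, one_apply]
  rw [adjugate_apply, hM, det_fromBlocks_zero₂₁, det_one, mul_one]

theorem toBlocks₁₁_newtonMatrix {ι κ κ' R : Type} [Fintype ι] [DecidableEq κ] [DecidableEq κ']
    [CommSemiring R] (A : ι → Matrix (κ ⊕ κ') (κ ⊕ κ') R) :
    (newtonMatrix A).toBlocks₁₁ = newtonMatrix fun α => (A α).toBlocks₁₁ := by
  ext i j
  simp [newtonMatrix, toBlocks₁₁, one_apply, Matrix.sum_apply]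

theorem gnt_boundary_formula_general {q m : ℕ}
    (d : Fin m → ℝ) (ρ μ : Fin q → ℝ) (B : Fin q → Fin m → ℝ) (c : Fin q → ℝ)
    (A : Fin q → Matrix (Fin m ⊕ Unit) (Fin m ⊕ Unit) ℝ)
    (hA : ∀ α, A α = Matrix.fromBlocks
        (ρ α • Matrix.diagonal d + μ α • (1 : Matrix (Fin m) (Fin m) ℝ))
        (Matrix.of fun i (_ : Unit) => B α i)
        (Matrix.of fun (_ : Unit) j => B α j)
        (Matrix.of fun (_ : Unit) (_ : Unit) => c α))
    (T : (Fin q → ℕ) → Matrix (Fin m ⊕ Unit) (Fin m ⊕ Unit) ℝ)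
    (hT0 : T 0 = 1)
    (hTrec : ∀ u : Fin q → ℕ, u ≠ 0 →
      T u = msigma A u • (1 : Matrix (Fin m ⊕ Unit) (Fin m ⊕ Unit) ℝ)
        - ∑ α, if u α = 0 then 0 else A α * T (Function.update u α (u α - 1)))
    (u : Fin q → ℕ) :
    (T u *ᵥ Pi.single (Sum.inr ()) 1) ⬝ᵥ Pi.single (Sum.inr ()) 1
      = msigma (fun α => ρ α • Matrix.diagonal d + μ α • (1 : Matrix (Fin m) (Fin m) ℝ)) u := by
  have hD : (fun α => (A α).toBlocks₁₁) =
      fun α => ρ α • Matrix.diagonal d + μ α • (1 : Matrix (Fin m) (Fin m) ℝ) := by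
    simp only [hA, toBlocks_fromBlocks₁₁]
  calc (T u *ᵥ Pi.single (Sum.inr ()) 1) ⬝ᵥ Pi.single (Sum.inr ()) 1
      = T u (.inr ()) (.inr ()) := by simp
    _ = coeff (Finsupp.equivFunOnFinite.symm u) (newtonMatrix A).toBlocks₁₁.det := by
      rw [eq_map_coeff_newtonMatrix_adjugate A T hT0 hTrec, map_apply, adjugate_inr_inr]
    _ = _ := by rw [toBlocks₁₁_newtonMatrix, hD, msigma_eq_coeff_det]

/-- for symmetric block matrices `A_α = [[ρ_α D + μ_α I, B_α],[B_αᵀ, c_α]]`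
with `D` diagonal and `ν` the last basis vector,
`⟨T_u ν, ν⟩ = σ̃_u`, where `σ̃_u` is the coefficient of `t^u` in `det(I_{n−1} + ∑ t_α D_α)`. -/
theorem gnt_boundary_formula {q m : ℕ} (hm : 1 ≤ m)
    (d : Fin m → ℝ) (ρ μ : Fin q → ℝ) (B : Fin q → Fin m → ℝ) (c : Fin q → ℝ)
    (A : Fin q → Matrix (Fin m ⊕ Unit) (Fin m ⊕ Unit) ℝ)
    (hA : ∀ α, A α = Matrix.fromBlocks
        (ρ α • Matrix.diagonal d + μ α • (1 : Matrix (Fin m) (Fin m) ℝ))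
        (Matrix.of fun i (_ : Unit) => B α i)
        (Matrix.of fun (_ : Unit) j => B α j)
        (Matrix.of fun (_ : Unit) (_ : Unit) => c α))
    (T : (Fin q → ℕ) → Matrix (Fin m ⊕ Unit) (Fin m ⊕ Unit) ℝ)
    (hT0 : T 0 = 1)
    (hTrec : ∀ u : Fin q → ℕ, u ≠ 0 →
      T u = msigma A u • (1 : Matrix (Fin m ⊕ Unit) (Fin m ⊕ Unit) ℝ)
        - ∑ α, if u α = 0 then 0 else A α * T (Function.update u α (u α - 1)))
    (u : Fin q → ℕ) :
    (T u *ᵥ Pi.single (Sum.inr ()) 1) ⬝ᵥ Pi.single (Sum.inr ()) 1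
      = msigma (fun α => ρ α • Matrix.diagonal d + μ α • (1 : Matrix (Fin m) (Fin m) ℝ)) u :=
  gnt_boundary_formula_general d ρ μ B c A hA T hT0 hTrec u
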